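/- arXiv:math/0406574 — 2 statements merged into one kernel-verified Lean document; each statement's English description precedes it below -/
import Mathlib

section
/- Let X be one of the types B, C, D (with n ≥ 2 for X = B, C and n ≥ 3 for X = D). Let λ = (λ_n,…,λ_1) and μ = (μ_n,…,μ_1) be dominant weights of type X_n with integer coordinates such that λ_n = μ_n, and set λ' = (λ_{n−1},…,λ_1), μ' = (μ_{n−1},…,μ_1), which are dominant weights of type X_{n−1}. Then K^{X_n}_{λ,μ}(q) = K^{X_{n−1}}_{λ',μ'}(q). -/
open scoped BigOperators

noncomputable section

/-- The `q`-analogue of Kostant's partition function attached to the finite set `R`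
of positive roots: the coefficient of `q^k` is the number of families
`(m_α)_{α ∈ R}` of nonnegative integers with `∑ m_α = k` and `∑ m_α • α = β`. -/
def kostantQ {n : ℕ} (R : Finset (Fin n → ℚ)) (β : Fin n → ℚ) : PowerSeries ℤ :=
  PowerSeries.mk fun k =>
    (Nat.card {m : {α // α ∈ R} → ℕ //
      (∑ α, m α) = k ∧ (∑ α, (m α : ℚ) • (α : Fin n → ℚ)) = β} : ℤ)

/-- Positive roots of type `D_n` : `e_i - e_j` and `e_i + e_j` for `j < i`. -/
def rootsD (n : ℕ) : Finset (Fin n → ℚ) :=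
  ((Finset.univ : Finset (Fin n × Fin n)).filter fun p => p.2 < p.1).image
      (fun p => Pi.single p.1 (1 : ℚ) - Pi.single p.2 1) ∪
  ((Finset.univ : Finset (Fin n × Fin n)).filter fun p => p.2 < p.1).image
      (fun p => Pi.single p.1 (1 : ℚ) + Pi.single p.2 1)

/-- Positive roots of type `B_n`. -/
def rootsB (n : ℕ) : Finset (Fin n → ℚ) :=
  rootsD n ∪ (Finset.univ : Finset (Fin n)).image fun i => Pi.single i (1 : ℚ)

/-- Positive roots of type `C_n`. -/
def rootsC (n : ℕ) : Finset (Fin n → ℚ) :=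
  rootsD n ∪ (Finset.univ : Finset (Fin n)).image fun i => Pi.single i (2 : ℚ)

/-- Positive roots of type `A_{n-1}` : `e_i - e_j` for `j < i`. -/
def rootsA (n : ℕ) : Finset (Fin n → ℚ) :=
  ((Finset.univ : Finset (Fin n × Fin n)).filter fun p => p.2 < p.1).image
      fun p => Pi.single p.1 (1 : ℚ) - Pi.single p.2 1

/-- `ρ` of type `B_n` : `e_i`-coordinate `i - 1/2` (`0`-based index `i ↦ i + 1/2`). -/
def rhoB (n : ℕ) : Fin n → ℚ := fun i => ((i : ℕ) : ℚ) + 1/2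

/-- `ρ` of type `C_n` : `e_i`-coordinate `i`. -/
def rhoC (n : ℕ) : Fin n → ℚ := fun i => ((i : ℕ) : ℚ) + 1

/-- `ρ` of type `D_n` : `e_i`-coordinate `i - 1`. -/
def rhoD (n : ℕ) : Fin n → ℚ := fun i => ((i : ℕ) : ℚ)

/-- `ρ` of type `A_{n-1}` : `e_i`-coordinate `i - 1`. -/
def rhoA (n : ℕ) : Fin n → ℚ := fun i => ((i : ℕ) : ℚ)

/-- The signed permutation `(σ, ε)` acting on a weight: it maps `e_j` to `± e_{σ j}`. -/
def wAct {n : ℕ} (σ : Equiv.Perm (Fin n)) (ε : Fin n → Bool) (β : Fin n → ℚ) :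
    Fin n → ℚ := fun i => (if ε i then -1 else 1) * β (σ⁻¹ i)

/-- The determinant (sign) of the signed permutation `(σ, ε)`. -/
def wDet {n : ℕ} (σ : Equiv.Perm (Fin n)) (ε : Fin n → Bool) : ℤ :=
  (Equiv.Perm.sign σ : ℤ) * ∏ i, (if ε i then (-1 : ℤ) else 1)

/-- Kostka-Foulkes polynomial of type `B_n`, as a power series in `q`. -/
def KB (n : ℕ) (lam mu : Fin n → ℚ) : PowerSeries ℤ :=
  ∑ σ : Equiv.Perm (Fin n), ∑ ε : Fin n → Bool,
    wDet σ ε • kostantQ (rootsB n) (wAct σ ε (lam + rhoB n) - (mu + rhoB n))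

/-- Kostka-Foulkes polynomial of type `C_n`, as a power series in `q`. -/
def KC (n : ℕ) (lam mu : Fin n → ℚ) : PowerSeries ℤ :=
  ∑ σ : Equiv.Perm (Fin n), ∑ ε : Fin n → Bool,
    wDet σ ε • kostantQ (rootsC n) (wAct σ ε (lam + rhoC n) - (mu + rhoC n))

/-- Kostka-Foulkes polynomial of type `D_n`, as a power series in `q` (the Weyl group
consists of the signed permutations with an even number of sign changes). -/
def KD (n : ℕ) (lam mu : Fin n → ℚ) : PowerSeries ℤ :=
  ∑ σ : Equiv.Perm (Fin n), ∑ ε : Fin n → Bool,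
    if (∏ i, (if ε i then (-1 : ℤ) else 1)) = 1 then
      wDet σ ε • kostantQ (rootsD n) (wAct σ ε (lam + rhoD n) - (mu + rhoD n))
    else 0

/-- Kostka-Foulkes polynomial of type `A_{n-1}`, as a power series in `q`. -/
def KA (n : ℕ) (lam mu : Fin n → ℚ) : PowerSeries ℤ :=
  ∑ σ : Equiv.Perm (Fin n),
    (Equiv.Perm.sign σ : ℤ) •
      kostantQ (rootsA n) ((fun i => (lam + rhoA n) (σ⁻¹ i)) - (mu + rhoA n))

/-- Dominant weight of type `B_n` : `λ_n ≥ ⋯ ≥ λ_1 ≥ 0`, all coordinates in `ℤ`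
or all in `ℤ + 1/2`. -/
def DominantB {n : ℕ} (lam : Fin n → ℚ) : Prop :=
  Monotone lam ∧ (∀ i, 0 ≤ lam i) ∧
    ((∀ i, ∃ z : ℤ, lam i = z) ∨ (∀ i, ∃ z : ℤ, lam i = z + 1/2))

/-- Dominant weight of type `C_n` : `λ_n ≥ ⋯ ≥ λ_1 ≥ 0`, integer coordinates. -/
def DominantC {n : ℕ} (lam : Fin n → ℚ) : Prop :=
  Monotone lam ∧ (∀ i, 0 ≤ lam i) ∧ ∀ i, ∃ z : ℤ, lam i = z

/-- Dominant weight of type `D_n` : `λ_n ≥ ⋯ ≥ λ_2 ≥ |λ_1|`, all coordinates in `ℤ`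
or all in `ℤ + 1/2`. -/
def DominantD {n : ℕ} (lam : Fin n → ℚ) : Prop :=
  (∀ i j : Fin n, i ≤ j → 0 < (i : ℕ) → lam i ≤ lam j) ∧
  (∀ h : 0 < n, ∀ j : Fin n, 0 < (j : ℕ) → |lam ⟨0, h⟩| ≤ lam j) ∧
  ((∀ i, ∃ z : ℤ, lam i = z) ∨ (∀ i, ∃ z : ℤ, lam i = z + 1/2))

/-- Restriction of a weight of rank `n` to the first `n - 1` coordinates
(i.e. forgetting the `e_n`-coordinate). -/
def restrict1 {n : ℕ} (lam : Fin n → ℚ) : Fin (n - 1) → ℚ :=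
  fun i => lam ⟨(i : ℕ), by have := i.2; omega⟩

/-- Pieri number `b^λ_{γ,r}` of type `B_n`. -/
def bPieri {m : ℕ} (γ lam : Fin m → ℚ) (r : ℕ) : ℕ :=
  Nat.card {t : (Fin m → ℕ) × (Fin m → ℕ) × Bool //
    ((cond t.2.2 1 0) + ∑ i, (t.1 i + t.2.1 i)) = r ∧
    (∀ i, ((t.2.1 i : ℚ) - (t.1 i : ℚ)) = lam i - γ i) ∧
    (∀ i : Fin m, ∀ h : (i : ℕ) + 1 < m,
      lam i ≤ lam ⟨(i : ℕ) + 1, h⟩ - (t.2.1 ⟨(i : ℕ) + 1, h⟩ : ℚ)) ∧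
    (∀ i : Fin m, ∀ h : (i : ℕ) + 1 < m,
      lam i + (t.1 i : ℚ) - (t.2.1 i : ℚ) ≤
        lam ⟨(i : ℕ) + 1, h⟩ - (t.2.1 ⟨(i : ℕ) + 1, h⟩ : ℚ)) ∧
    (∀ h : 0 < m,
      if t.2.2 then (0 : ℚ) < lam ⟨0, h⟩ - (t.2.1 ⟨0, h⟩ : ℚ)
      else (0 : ℚ) ≤ lam ⟨0, h⟩ - (t.2.1 ⟨0, h⟩ : ℚ))}

/-- Pieri number `c^λ_{γ,r}` of type `C_n`. -/
def cPieri {m : ℕ} (γ lam : Fin m → ℚ) (r : ℕ) : ℕ :=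
  Nat.card {t : (Fin m → ℕ) × (Fin m → ℕ) //
    (∑ i, (t.1 i + t.2 i)) = r ∧
    (∀ i, ((t.2 i : ℚ) - (t.1 i : ℚ)) = lam i - γ i) ∧
    (∀ i : Fin m, ∀ h : (i : ℕ) + 1 < m,
      lam i ≤ lam ⟨(i : ℕ) + 1, h⟩ - (t.2 ⟨(i : ℕ) + 1, h⟩ : ℚ)) ∧
    (∀ i : Fin m, ∀ h : (i : ℕ) + 1 < m,
      lam i + (t.1 i : ℚ) - (t.2 i : ℚ) ≤
        lam ⟨(i : ℕ) + 1, h⟩ - (t.2 ⟨(i : ℕ) + 1, h⟩ : ℚ)) ∧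
    (∀ h : 0 < m, (0 : ℚ) ≤ lam ⟨0, h⟩ - (t.2 ⟨0, h⟩ : ℚ))}

/-- Pieri number `d^λ_{γ,r}` of type `D_n`. -/
def dPieri {m : ℕ} (γ lam : Fin m → ℚ) (r : ℕ) : ℕ :=
  Nat.card {t : (Fin m → ℕ) × (Fin m → ℕ) //
    (∀ h : 0 < m, min (t.1 ⟨0, h⟩) (t.2 ⟨0, h⟩) = 0) ∧
    (∑ i, (t.1 i + t.2 i)) = r ∧
    (∀ i, ((t.2 i : ℚ) - (t.1 i : ℚ)) = lam i - γ i) ∧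
    (∀ h : 1 < m,
      (t.1 ⟨0, by omega⟩ = 0 →
        lam ⟨0, by omega⟩ ≤ lam ⟨1, h⟩ - (t.2 ⟨1, h⟩ : ℚ)) ∧
      (0 < t.1 ⟨0, by omega⟩ →
        -lam ⟨0, by omega⟩ ≤ lam ⟨1, h⟩ - (t.2 ⟨1, h⟩ : ℚ))) ∧
    (∀ i : Fin m, 1 ≤ (i : ℕ) → ∀ h : (i : ℕ) + 1 < m,
      lam i ≤ lam ⟨(i : ℕ) + 1, h⟩ - (t.2 ⟨(i : ℕ) + 1, h⟩ : ℚ)) ∧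
    (∀ i : Fin m, 1 ≤ (i : ℕ) → ∀ h : (i : ℕ) + 1 < m,
      lam i + (t.1 i : ℚ) - (t.2 i : ℚ) ≤
        lam ⟨(i : ℕ) + 1, h⟩ - (t.2 ⟨(i : ℕ) + 1, h⟩ : ℚ)) ∧
    (∀ h : 1 < m,
      (t.1 ⟨0, by omega⟩ = 0 → 0 ≤ γ ⟨0, by omega⟩ →
        lam ⟨0, by omega⟩ - (t.2 ⟨0, by omega⟩ : ℚ) ≤ lam ⟨1, h⟩ - (t.2 ⟨1, h⟩ : ℚ)) ∧
      (t.2 ⟨0, by omega⟩ = 0 → 0 ≤ γ ⟨0, by omega⟩ →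
        lam ⟨0, by omega⟩ + (t.1 ⟨0, by omega⟩ : ℚ) ≤ lam ⟨1, h⟩ - (t.2 ⟨1, h⟩ : ℚ)) ∧
      (t.2 ⟨0, by omega⟩ = 0 → γ ⟨0, by omega⟩ < 0 →
        -lam ⟨0, by omega⟩ - (t.1 ⟨0, by omega⟩ : ℚ) ≤ lam ⟨1, h⟩ - (t.2 ⟨1, h⟩ : ℚ)) ∧
      (t.1 ⟨0, by omega⟩ = 0 → γ ⟨0, by omega⟩ < 0 →
        -lam ⟨0, by omega⟩ + (t.2 ⟨0, by omega⟩ : ℚ) ≤ lam ⟨1, h⟩ - (t.2 ⟨1, h⟩ : ℚ)))}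

/-- The monomial `x^β = ∏ y_i ^ (2 β_i)` in the Laurent polynomial ring
`ℤ[y_1^{±1}, …, y_n^{±1}]`, realized as the group algebra of `ℤ^n`. -/
def xpow {n : ℕ} (β : Fin n → ℚ) : AddMonoidAlgebra ℤ (Fin n → ℤ) :=
  AddMonoidAlgebra.single (fun i => ⌊2 * β i⌋) 1

/-- The Weyl alternant `a_β = ∑_{σ ∈ W_{B_n}} det σ · x^{σ β}` of type `B_n`. -/
def altB {n : ℕ} (β : Fin n → ℚ) : AddMonoidAlgebra ℤ (Fin n → ℤ) :=
  ∑ σ : Equiv.Perm (Fin n), ∑ ε : Fin n → Bool, wDet σ ε • xpow (wAct σ ε β)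

/-- The Weyl alternant `a_β = ∑_{σ ∈ W_{D_n}} det σ · x^{σ β}` of type `D_n`. -/
def altD {n : ℕ} (β : Fin n → ℚ) : AddMonoidAlgebra ℤ (Fin n → ℤ) :=
  ∑ σ : Equiv.Perm (Fin n), ∑ ε : Fin n → Bool,
    if (∏ i, (if ε i then (-1 : ℤ) else 1)) = 1 then wDet σ ε • xpow (wAct σ ε β) else 0

end

noncomputable section KRRAux

namespace KRR

open Finset Equiv

variable {m : ℕ}

/-- extension of a weight by a trailing `0`. -/
def ext (α : Fin m → ℚ) : Fin (m + 1) → ℚ := Fin.snoc α 0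

lemma ext_castSucc (α : Fin m → ℚ) (i : Fin m) : ext α i.castSucc = α i :=
  Fin.snoc_castSucc _ _ _

lemma ext_last (α : Fin m → ℚ) : ext α (Fin.last m) = 0 := Fin.snoc_last _ _

lemma init_ext (α : Fin m → ℚ) : Fin.init (ext α) = α := Fin.init_snoc _ _

lemma ext_injective : Function.Injective (ext (m := m)) := fun a b h => by
  rw [← init_ext a, ← init_ext b, h]

lemma ext_init {α : Fin (m + 1) → ℚ} (h : α (Fin.last m) = 0) : ext (Fin.init α) = α := by
  rw [ext, ← h, Fin.snoc_init_self]

lemma ext_add (α β : Fin m → ℚ) : ext (α + β) = ext α + ext β := by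
  funext k
  refine Fin.lastCases ?_ (fun i => ?_) k
  · simp [ext_last, ext]
  · simp [ext_castSucc, ext]

lemma ext_sub (α β : Fin m → ℚ) : ext (α - β) = ext α - ext β := by
  funext k
  refine Fin.lastCases ?_ (fun i => ?_) k
  · simp [ext_last, ext]
  · simp [ext_castSucc, ext]

lemma ext_smul (c : ℚ) (α : Fin m → ℚ) : ext (c • α) = c • ext α := by
  funext k
  refine Fin.lastCases ?_ (fun i => ?_) k
  · simp [ext_last, ext]
  · simp [ext_castSucc, ext]

lemma ext_sum {ι : Type*} (s : Finset ι) (f : ι → Fin m → ℚ) :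
    ext (∑ i ∈ s, f i) = ∑ i ∈ s, ext (f i) := by
  classical
  induction s using Finset.induction with
  | empty => funext k; refine Fin.lastCases ?_ (fun i => ?_) k <;> simp [ext_last, ext_castSucc, ext]
  | insert _ _ h ih => rw [Finset.sum_insert h, Finset.sum_insert h, ext_add, ih]

lemma ext_single (i : Fin m) (c : ℚ) : ext (Pi.single i c) = Pi.single i.castSucc c := by
  funext k
  refine Fin.lastCases ?_ (fun j => ?_) k
  · rw [ext_last, Pi.single_apply, if_neg (Fin.castSucc_lt_last i).ne']
  · rw [ext_castSucc, Pi.single_apply, Pi.single_apply]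
    simp [Fin.castSucc_inj]

/-- Vanishing of the partition function when the top coordinate is negative. -/
lemma kostantQ_eq_zero (R : Finset (Fin (m + 1) → ℚ))
    (hpos : ∀ α ∈ R, 0 ≤ α (Fin.last m)) (β : Fin (m + 1) → ℚ)
    (hβ : β (Fin.last m) < 0) : kostantQ R β = 0 := by
  classical
  ext k
  simp only [kostantQ, PowerSeries.coeff_mk, map_zero]
  norm_cast
  have : IsEmpty {f : {α // α ∈ R} → ℕ //
      (∑ α, f α) = k ∧ (∑ α, (f α : ℚ) • (α : Fin (m + 1) → ℚ)) = β} := by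
    constructor
    rintro ⟨f, -, hv⟩
    have h1 : (∑ α : {α // α ∈ R}, (f α : ℚ) * (α : Fin (m + 1) → ℚ) (Fin.last m))
        = β (Fin.last m) := by
      have := congrFun hv (Fin.last m)
      simpa using this
    have h2 : 0 ≤ ∑ α : {α // α ∈ R}, (f α : ℚ) * (α : Fin (m + 1) → ℚ) (Fin.last m) :=
      Finset.sum_nonneg fun a _ => mul_nonneg (by positivity) (hpos a.1 a.2)
    linarith
  exact @Nat.card_of_isEmpty _ this

/-- Restriction of the partition function when the top coordinate vanishes. -/
lemma kostantQ_restrict (R : Finset (Fin (m + 1) → ℚ)) (R' : Finset (Fin m → ℚ))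
    (hpos : ∀ α ∈ R, 0 ≤ α (Fin.last m))
    (himg : ∀ α' : Fin m → ℚ, α' ∈ R' ↔ ext α' ∈ R)
    (β : Fin (m + 1) → ℚ) (hβ : β (Fin.last m) = 0) :
    kostantQ R β = kostantQ R' (Fin.init β) := by
  classical
  ext k
  simp only [kostantQ, PowerSeries.coeff_mk]
  congr 1
  norm_cast
  apply Nat.card_congr
  -- the embedding of roots
  set e : {α' // α' ∈ R'} → {α // α ∈ R} :=
    fun a => ⟨ext a.1, (himg a.1).mp a.2⟩ with he
  have hei : Function.Injective e := by
    intro a b h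
    exact Subtype.ext (ext_injective (congrArg Subtype.val h))
  -- key sum identities for functions supported on the image of `e`
  have hsum1 : ∀ f : {α // α ∈ R} → ℕ,
      (∀ a : {α // α ∈ R}, (a : Fin (m + 1) → ℚ) (Fin.last m) ≠ 0 → f a = 0) →
      (∑ a, f a) = ∑ b : {α' // α' ∈ R'}, f (e b) := by
    intro f hf
    rw [← Finset.sum_image (g := e) (f := f) (fun x _ y _ h => hei h)]
    refine (Finset.sum_subset (Finset.subset_univ _) ?_).symm
    intro a _ ha
    refine hf a fun h0 => ha ?_
    have hmem : Fin.init a.1 ∈ R' := by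
      rw [himg, ext_init h0]; exact a.2
    refine Finset.mem_image.2 ⟨⟨Fin.init a.1, hmem⟩, Finset.mem_univ _, ?_⟩
    exact Subtype.ext (ext_init h0)
  have hsum2 : ∀ f : {α // α ∈ R} → ℕ,
      (∀ a : {α // α ∈ R}, (a : Fin (m + 1) → ℚ) (Fin.last m) ≠ 0 → f a = 0) →
      (∑ a, (f a : ℚ) • (a : Fin (m + 1) → ℚ))
        = ext (∑ b : {α' // α' ∈ R'}, (f (e b) : ℚ) • (b : Fin m → ℚ)) := by
    intro f hf
    rw [ext_sum]
    have : ∀ b : {α' // α' ∈ R'},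
        ext ((f (e b) : ℚ) • (b : Fin m → ℚ)) = (f (e b) : ℚ) • ((e b : Fin (m + 1) → ℚ)) := by
      intro b; rw [ext_smul]
    rw [Finset.sum_congr rfl fun b _ => this b]
    rw [← Finset.sum_image (g := e)
      (f := fun a : {α // α ∈ R} => (f a : ℚ) • (a : Fin (m + 1) → ℚ))
      (fun x _ y _ h => hei h)]
    refine (Finset.sum_subset (Finset.subset_univ _) ?_).symm
    intro a _ ha
    have h0 : f a = 0 := by
      refine hf a fun h0 => ha ?_
      have hmem : Fin.init a.1 ∈ R' := by
        rw [himg, ext_init h0]; exact a.2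
      refine Finset.mem_image.2 ⟨⟨Fin.init a.1, hmem⟩, Finset.mem_univ _, ?_⟩
      exact Subtype.ext (ext_init h0)
    simp [h0]
  -- support property for a legal family
  have hsupp : ∀ f : {α // α ∈ R} → ℕ,
      (∑ a, (f a : ℚ) • (a : Fin (m + 1) → ℚ)) = β →
      ∀ a : {α // α ∈ R}, (a : Fin (m + 1) → ℚ) (Fin.last m) ≠ 0 → f a = 0 := by
    intro f hv a ha
    have h1 : (∑ x : {α // α ∈ R}, (f x : ℚ) * (x : Fin (m + 1) → ℚ) (Fin.last m)) = 0 := by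
      have := congrFun hv (Fin.last m)
      simpa [hβ] using this
    have h2 : ∀ x : {α // α ∈ R}, x ∈ Finset.univ →
        0 ≤ (f x : ℚ) * (x : Fin (m + 1) → ℚ) (Fin.last m) :=
      fun x _ => mul_nonneg (by positivity) (hpos x.1 x.2)
    have h3 := (Finset.sum_eq_zero_iff_of_nonneg h2).1 h1 a (Finset.mem_univ a)
    have h4 : (f a : ℚ) = 0 := by
      rcases mul_eq_zero.1 h3 with h | h
      · exact h
      · exact absurd h ha
    exact_mod_cast h4
  -- the candidate inverse family
  set fN : ({α' // α' ∈ R'} → ℕ) → {α // α ∈ R} → ℕ := fun g a =>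
    if h : (a : Fin (m + 1) → ℚ) (Fin.last m) = 0 then
      g ⟨Fin.init a.1, by rw [himg, ext_init h]; exact a.2⟩ else 0 with hfN
  have hfN1 : ∀ (g : {α' // α' ∈ R'} → ℕ) (a : {α // α ∈ R}),
      (a : Fin (m + 1) → ℚ) (Fin.last m) ≠ 0 → fN g a = 0 := by
    intro g a h; rw [hfN]; exact dif_neg h
  have hfN2 : ∀ (g : {α' // α' ∈ R'} → ℕ) (b : {α' // α' ∈ R'}), fN g (e b) = g b := by
    intro g b
    have h0 : ((e b : Fin (m + 1) → ℚ)) (Fin.last m) = 0 := ext_last b.1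
    rw [hfN]
    simp only
    rw [dif_pos h0]
    exact congrArg g (Subtype.ext (init_ext b.1))
  refine
    { toFun := fun x => ⟨fun b => x.1 (e b), ?_, ?_⟩
      invFun := fun y => ⟨fun a =>
        fN y.1 a, ?_, ?_⟩
      left_inv := ?_
      right_inv := ?_ }
  · rw [← hsum1 x.1 (hsupp x.1 x.2.2)]; exact x.2.1
  · have := hsum2 x.1 (hsupp x.1 x.2.2)
    rw [show (∑ a, (x.1 a : ℚ) • (a : Fin (m + 1) → ℚ)) = β from x.2.2] at this
    have h5 : ext (Fin.init β) = β := ext_init hβ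
    exact ext_injective (by beta_reduce; rw [h5]; exact this.symm)
  · rw [hsum1 _ (hfN1 y.1), Finset.sum_congr rfl fun b _ => hfN2 y.1 b]
    exact y.2.1
  · refine (hsum2 _ (hfN1 y.1)).trans ?_
    rw [
      Finset.sum_congr rfl fun (b : {α' // α' ∈ R'}) (_ : b ∈ Finset.univ) =>
        (by rw [hfN2 y.1 b] :
          ((fN y.1 (e b) : ℚ) • (b : Fin m → ℚ)) = (y.1 b : ℚ) • (b : Fin m → ℚ)),
      show (∑ b, (y.1 b : ℚ) • (b : Fin m → ℚ)) = Fin.init β from y.2.2]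
    exact ext_init hβ
  · intro x
    apply Subtype.ext
    funext a
    by_cases h : (a : Fin (m + 1) → ℚ) (Fin.last m) = 0
    · show fN _ a = _
      rw [hfN]
      simp only
      rw [dif_pos h]
      exact congrArg x.1 (Subtype.ext (ext_init h))
    · show fN _ a = _
      rw [hfN1 _ a h, hsupp x.1 x.2.2 a h]
  · intro y
    apply Subtype.ext
    funext b
    exact hfN2 y.1 b

/-! ### Root systems -/

lemma mem_rootsD {n : ℕ} {α : Fin n → ℚ} :
    α ∈ rootsD n ↔ ∃ i j : Fin n, j < i ∧
      (α = Pi.single i 1 - Pi.single j 1 ∨ α = Pi.single i 1 + Pi.single j 1) := by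
  simp only [rootsD, Finset.mem_union, Finset.mem_image, Finset.mem_filter,
    Finset.mem_univ, true_and, Prod.exists]
  constructor
  · rintro (⟨i, j, h, rfl⟩ | ⟨i, j, h, rfl⟩)
    exacts [⟨i, j, h, Or.inl rfl⟩, ⟨i, j, h, Or.inr rfl⟩]
  · rintro ⟨i, j, h, rfl | rfl⟩
    exacts [Or.inl ⟨i, j, h, rfl⟩, Or.inr ⟨i, j, h, rfl⟩]

lemma mem_rootsB {n : ℕ} {α : Fin n → ℚ} :
    α ∈ rootsB n ↔ α ∈ rootsD n ∨ ∃ i, α = Pi.single i (1 : ℚ) := by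
  simp only [rootsB, Finset.mem_union, Finset.mem_image, Finset.mem_univ, true_and]
  constructor
  · rintro (h | ⟨i, rfl⟩)
    exacts [Or.inl h, Or.inr ⟨i, rfl⟩]
  · rintro (h | ⟨i, rfl⟩)
    exacts [Or.inl h, Or.inr ⟨i, rfl⟩]

lemma mem_rootsC {n : ℕ} {α : Fin n → ℚ} :
    α ∈ rootsC n ↔ α ∈ rootsD n ∨ ∃ i, α = Pi.single i (2 : ℚ) := by
  simp only [rootsC, Finset.mem_union, Finset.mem_image, Finset.mem_univ, true_and]
  constructor
  · rintro (h | ⟨i, rfl⟩)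
    exacts [Or.inl h, Or.inr ⟨i, rfl⟩]
  · rintro (h | ⟨i, rfl⟩)
    exacts [Or.inl h, Or.inr ⟨i, rfl⟩]

lemma hposD : ∀ α ∈ rootsD (m + 1), 0 ≤ α (Fin.last m) := by
  intro α hα
  obtain ⟨i, j, hji, hc⟩ := mem_rootsD.1 hα
  have hj : j ≠ Fin.last m := ne_of_lt (lt_of_lt_of_le hji (Fin.le_last i))
  rcases hc with rfl | rfl <;>
    simp only [Pi.sub_apply, Pi.add_apply, Pi.single_apply] <;>
    rw [if_neg (Ne.symm hj)] <;> split <;> norm_num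

lemma hposB : ∀ α ∈ rootsB (m + 1), 0 ≤ α (Fin.last m) := by
  intro α hα
  rcases mem_rootsB.1 hα with h | ⟨i, rfl⟩
  · exact hposD α h
  · rw [Pi.single_apply]; split <;> norm_num

lemma hposC : ∀ α ∈ rootsC (m + 1), 0 ≤ α (Fin.last m) := by
  intro α hα
  rcases mem_rootsC.1 hα with h | ⟨i, rfl⟩
  · exact hposD α h
  · rw [Pi.single_apply]; split <;> norm_num

lemma single_ne_last {n : ℕ} {i : Fin (n + 1)} {c : ℚ} (hc : c ≠ 0)
    (h : (Pi.single i c : Fin (n + 1) → ℚ) (Fin.last n) = 0) : i ≠ Fin.last n := by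
  intro hi
  rw [hi, Pi.single_eq_same] at h
  exact hc h

lemma himgD : ∀ α' : Fin m → ℚ, α' ∈ rootsD m ↔ ext α' ∈ rootsD (m + 1) := by
  intro α'
  constructor
  · intro h
    obtain ⟨i, j, hji, hc⟩ := mem_rootsD.1 h
    refine mem_rootsD.2 ⟨i.castSucc, j.castSucc, by simpa using hji, ?_⟩
    rcases hc with rfl | rfl
    · left; rw [ext_sub, ext_single, ext_single]
    · right; rw [ext_add, ext_single, ext_single]
  · intro h
    obtain ⟨i, j, hji, hc⟩ := mem_rootsD.1 h
    have hlast : ext α' (Fin.last m) = 0 := ext_last α'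
    have hj : j ≠ Fin.last m := ne_of_lt (lt_of_lt_of_le hji (Fin.le_last i))
    have hi : i ≠ Fin.last m := by
      rcases hc with hc | hc <;> rw [hc] at hlast <;>
        simp only [Pi.sub_apply, Pi.add_apply, Pi.single_apply,
          if_neg (Ne.symm hj)] at hlast <;>
      · intro hii
        rw [if_pos hii.symm] at hlast
        norm_num at hlast
    set i0 := i.castPred hi with hi0
    set j0 := j.castPred hj with hj0
    have hii : i = i0.castSucc := (Fin.castSucc_castPred i hi).symm
    have hjj : j = j0.castSucc := (Fin.castSucc_castPred j hj).symm
    have hji0 : j0 < i0 := by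
      rw [hii, hjj, Fin.castSucc_lt_castSucc_iff] at hji; exact hji
    refine mem_rootsD.2 ⟨i0, j0, hji0, ?_⟩
    rcases hc with hc | hc
    · left
      apply ext_injective
      rw [hc, ext_sub, ext_single, ext_single, hii, hjj]
    · right
      apply ext_injective
      rw [hc, ext_add, ext_single, ext_single, hii, hjj]

lemma himg_single {c : ℚ} (hc : c ≠ 0) (α' : Fin m → ℚ) :
    (∃ i : Fin m, α' = Pi.single i c) ↔ ∃ i : Fin (m + 1), ext α' = Pi.single i c := by
  constructor
  · rintro ⟨i, rfl⟩
    exact ⟨i.castSucc, ext_single i c⟩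
  · rintro ⟨i, hi⟩
    have hlast : ext α' (Fin.last m) = 0 := ext_last α'
    rw [hi] at hlast
    have hne : i ≠ Fin.last m := single_ne_last hc hlast
    refine ⟨i.castPred hne, ?_⟩
    apply ext_injective
    rw [hi, ext_single, Fin.castSucc_castPred]

lemma himgB : ∀ α' : Fin m → ℚ, α' ∈ rootsB m ↔ ext α' ∈ rootsB (m + 1) := by
  intro α'
  rw [mem_rootsB, mem_rootsB, himgD α', himg_single (by norm_num : (1 : ℚ) ≠ 0)]

lemma himgC : ∀ α' : Fin m → ℚ, α' ∈ rootsC m ↔ ext α' ∈ rootsC (m + 1) := by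
  intro α'
  rw [mem_rootsC, mem_rootsC, himgD α', himg_single (by norm_num : (2 : ℚ) ≠ 0)]

/-! ### Signed permutations fixing the last coordinate -/

/-- `Fin m` as the subtype of `Fin (m + 1)` avoiding `last`. -/
def emb : Fin m ≃ {i : Fin (m + 1) // i ≠ Fin.last m} where
  toFun i := ⟨i.castSucc, (Fin.castSucc_lt_last i).ne⟩
  invFun j := j.1.castPred j.2
  left_inv i := by simp
  right_inv j := Subtype.ext (Fin.castSucc_castPred _ j.2)

/-- Extend a permutation of `Fin m` to `Fin (m + 1)` fixing `last`. -/
def extPerm (σ : Perm (Fin m)) : Perm (Fin (m + 1)) :=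
  σ.extendDomain emb

lemma extPerm_castSucc (σ : Perm (Fin m)) (i : Fin m) :
    extPerm σ i.castSucc = (σ i).castSucc := by
  have := Equiv.Perm.extendDomain_apply_image (e := σ) (f := emb) i
  exact this

lemma extPerm_last (σ : Perm (Fin m)) : extPerm σ (Fin.last m) = Fin.last m :=
  Equiv.Perm.extendDomain_apply_not_subtype _ _ (by simp)

lemma extPerm_inv_castSucc (σ : Perm (Fin m)) (i : Fin m) :
    (extPerm σ)⁻¹ i.castSucc = (σ⁻¹ i).castSucc := by
  apply (extPerm σ).injective
  have h1 : ∀ (f : Perm (Fin (m + 1))) x, f (f⁻¹ x) = x := fun f x => f.apply_symm_apply x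
  have h2 : ∀ (f : Perm (Fin m)) x, f (f⁻¹ x) = x := fun f x => f.apply_symm_apply x
  rw [h1, extPerm_castSucc, h2]

lemma extPerm_inv_last (σ : Perm (Fin m)) : (extPerm σ)⁻¹ (Fin.last m) = Fin.last m := by
  apply (extPerm σ).injective
  have h1 : ∀ (f : Perm (Fin (m + 1))) x, f (f⁻¹ x) = x := fun f x => f.apply_symm_apply x
  rw [h1, extPerm_last]

lemma sign_extPerm (σ : Perm (Fin m)) : Equiv.Perm.sign (extPerm σ) = Equiv.Perm.sign σ :=
  Equiv.Perm.sign_extendDomain σ emb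

lemma extPerm_injective : Function.Injective (extPerm (m := m)) := by
  intro σ τ h
  apply Equiv.ext
  intro i
  apply Fin.castSucc_injective m
  rw [← extPerm_castSucc, ← extPerm_castSucc, h]

lemma exists_extPerm (σ : Perm (Fin (m + 1))) (h : σ (Fin.last m) = Fin.last m) :
    ∃ σ' : Perm (Fin m), extPerm σ' = σ := by
  have hp : ∀ i : Fin (m + 1), i ≠ Fin.last m ↔ σ i ≠ Fin.last m := by
    intro i
    have h2 : σ i = Fin.last m ↔ i = Fin.last m := by
      conv_lhs => rw [← h]
      exact Equiv.apply_eq_iff_eq σ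
    exact not_congr h2.symm
  refine ⟨emb.symm.permCongr (σ.subtypePerm fun i => (hp i).symm), ?_⟩
  apply Equiv.ext
  intro x
  refine Fin.lastCases ?_ (fun i => ?_) x
  · rw [extPerm_last, h]
  · rw [extPerm_castSucc]
    rw [Equiv.permCongr_apply, Equiv.symm_symm]
    exact Fin.castSucc_castPred _ ((σ.subtypePerm fun i => (hp i).symm) (emb i)).2

lemma snoc_bool_injective : Function.Injective
    (fun ε' : Fin m → Bool => Fin.snoc ε' false : (Fin m → Bool) → Fin (m + 1) → Bool) := by
  intro x y h
  have := congrArg Fin.init h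
  rwa [Fin.init_snoc, Fin.init_snoc] at this

lemma prod_ite_snoc (ε' : Fin m → Bool) :
    (∏ i : Fin (m + 1), (if Fin.snoc (α := fun _ => Bool) ε' false i = true then (-1 : ℤ) else 1))
      = ∏ i : Fin m, (if ε' i = true then (-1 : ℤ) else 1) := by
  rw [Fin.prod_univ_castSucc]
  simp

lemma wDet_ext (σ' : Perm (Fin m)) (ε' : Fin m → Bool) :
    wDet (extPerm σ') (Fin.snoc ε' false) = wDet σ' ε' := by
  rw [wDet, wDet, sign_extPerm, prod_ite_snoc]

/-! ### The generic rank-reduction for Weyl-type alternating sums -/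

lemma weyl_sum_reduce
    (R : Finset (Fin (m + 1) → ℚ)) (R' : Finset (Fin m → ℚ))
    (hpos : ∀ α ∈ R, 0 ≤ α (Fin.last m))
    (himg : ∀ α' : Fin m → ℚ, α' ∈ R' ↔ ext α' ∈ R)
    (cc : (Fin (m + 1) → Bool) → ℤ) (cc' : (Fin m → Bool) → ℤ)
    (hcc : ∀ ε' : Fin m → Bool, cc (Fin.snoc ε' false) = cc' ε')
    (ν νμ : Fin (m + 1) → ℚ)
    (hν : ∀ j : Fin (m + 1), j ≠ Fin.last m → |ν j| < ν (Fin.last m))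
    (hν0 : 0 < ν (Fin.last m)) (heq : νμ (Fin.last m) = ν (Fin.last m)) :
    (∑ σ : Perm (Fin (m + 1)), ∑ ε : Fin (m + 1) → Bool,
        (cc ε * wDet σ ε) • kostantQ R (wAct σ ε ν - νμ)) =
      ∑ σ' : Perm (Fin m), ∑ ε' : Fin m → Bool,
        (cc' ε' * wDet σ' ε') • kostantQ R' (wAct σ' ε' (Fin.init ν) - Fin.init νμ) := by
  classical
  rw [← Fintype.sum_prod_type', ← Fintype.sum_prod_type']
  set T : Perm (Fin (m + 1)) × (Fin (m + 1) → Bool) → PowerSeries ℤ :=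
    fun p => (cc p.2 * wDet p.1 p.2) • kostantQ R (wAct p.1 p.2 ν - νμ) with hT
  set g : Perm (Fin m) × (Fin m → Bool) → Perm (Fin (m + 1)) × (Fin (m + 1) → Bool) :=
    fun x => (extPerm x.1, Fin.snoc x.2 false) with hg
  have hginj : Function.Injective g := by
    intro x y h
    rw [hg] at h
    simp only [Prod.mk.injEq] at h
    exact Prod.ext (extPerm_injective h.1) (snoc_bool_injective h.2)
  have hβlast : ∀ (σ : Perm (Fin (m + 1))) (ε : Fin (m + 1) → Bool),
      (wAct σ ε ν - νμ) (Fin.last m)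
        = (if ε (Fin.last m) then -1 else 1) * ν (σ⁻¹ (Fin.last m)) - ν (Fin.last m) := by
    intro σ ε
    rw [Pi.sub_apply, wAct, heq]
  have key : ∀ p : Perm (Fin (m + 1)) × (Fin (m + 1) → Bool),
      ¬(p.1 (Fin.last m) = Fin.last m ∧ p.2 (Fin.last m) = false) → T p = 0 := by
    rintro ⟨σ, ε⟩ hp
    have hneg : (wAct σ ε ν - νμ) (Fin.last m) < 0 := by
      rw [hβlast]
      by_cases hσ : σ⁻¹ (Fin.last m) = Fin.last m
      · have hσ' : σ (Fin.last m) = Fin.last m := by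
          conv_lhs => rw [← hσ]
          exact σ.apply_symm_apply _
        have hε : ε (Fin.last m) = true := by
          cases hε : ε (Fin.last m)
          · exact absurd ⟨hσ', hε⟩ hp
          · rfl
        rw [hσ, hε, if_pos rfl]
        linarith
      · have h1 := hν _ hσ
        have h2 : (if ε (Fin.last m) then (-1 : ℚ) else 1) * ν (σ⁻¹ (Fin.last m))
            ≤ |ν (σ⁻¹ (Fin.last m))| := by
          split
          · rw [neg_one_mul]; exact neg_le_abs _
          · rw [one_mul]; exact le_abs_self _
        linarith
    rw [hT]
    simp only
    rw [kostantQ_eq_zero R hpos _ hneg, smul_zero]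
  have main : ∀ x : Perm (Fin m) × (Fin m → Bool),
      T (g x) = (cc' x.2 * wDet x.1 x.2) •
        kostantQ R' (wAct x.1 x.2 (Fin.init ν) - Fin.init νμ) := by
    rintro ⟨σ', ε'⟩
    rw [hT, hg]
    simp only
    rw [hcc, wDet_ext]
    congr 1
    have h0 : (wAct (extPerm σ') (Fin.snoc ε' false) ν - νμ) (Fin.last m) = 0 := by
      rw [hβlast, extPerm_inv_last]
      simp
    have hinit : Fin.init (wAct (extPerm σ') (Fin.snoc ε' false) ν - νμ)
        = wAct σ' ε' (Fin.init ν) - Fin.init νμ := by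
      funext i
      show (wAct (extPerm σ') (Fin.snoc ε' false) ν - νμ) i.castSucc = _
      rw [Pi.sub_apply, wAct, Fin.snoc_castSucc, extPerm_inv_castSucc]
      rfl
    rw [kostantQ_restrict R R' hpos himg _ h0, hinit]
  calc (∑ p : Perm (Fin (m + 1)) × (Fin (m + 1) → Bool), T p)
      = ∑ p ∈ Finset.univ.image g, T p := by
        refine (Finset.sum_subset (Finset.subset_univ _) ?_).symm
        intro p _ hp
        refine key p fun hfix => hp ?_
        obtain ⟨σ', hσ'⟩ := exists_extPerm p.1 hfix.1
        refine Finset.mem_image.2 ⟨(σ', Fin.init p.2), Finset.mem_univ _, ?_⟩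
        rw [hg]
        simp only
        rw [hσ']
        refine Prod.ext rfl ?_
        show Fin.snoc (Fin.init p.2) false = p.2
        rw [← hfix.2]
        exact Fin.snoc_init_self p.2
    _ = ∑ x : Perm (Fin m) × (Fin m → Bool), T (g x) :=
        Finset.sum_image (fun x _ y _ h => hginj h)
    _ = _ := Finset.sum_congr rfl fun x _ => main x

/-! ### Rank reduction for each type -/

lemma init_add (f g : Fin (m + 1) → ℚ) : Fin.init (f + g) = Fin.init f + Fin.init g := rfl

lemma init_rhoB : Fin.init (rhoB (m + 1)) = rhoB m := by
  funext i; simp [Fin.init, rhoB]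

lemma init_rhoC : Fin.init (rhoC (m + 1)) = rhoC m := by
  funext i; simp [Fin.init, rhoC]

lemma init_rhoD : Fin.init (rhoD (m + 1)) = rhoD m := by
  funext i; simp [Fin.init, rhoD]

lemma ne_last_lt {j : Fin (m + 1)} (hj : j ≠ Fin.last m) : (j : ℕ) < m := by
  have h1 := j.isLt
  have h2 : (j : ℕ) ≠ m := fun hh => hj (Fin.ext hh)
  omega

lemma KB_reduce (lam mu : Fin (m + 1) → ℚ) (hl : DominantB lam) (hmu : DominantB mu)
    (he : lam (Fin.last m) = mu (Fin.last m)) :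
    KB (m + 1) lam mu = KB m (Fin.init lam) (Fin.init mu) := by
  have hν : ∀ j : Fin (m + 1), j ≠ Fin.last m →
      |(lam + rhoB (m + 1)) j| < (lam + rhoB (m + 1)) (Fin.last m) := by
    intro j hj
    have hj' : (j : ℕ) < m := ne_last_lt hj
    have h3 : lam j ≤ lam (Fin.last m) := hl.1 (Fin.le_last j)
    have h4 : 0 ≤ lam j := hl.2.1 j
    have h5 : ((j : ℕ) : ℚ) < (m : ℚ) := by exact_mod_cast hj'
    have h6 : (0 : ℚ) ≤ ((j : ℕ) : ℚ) := Nat.cast_nonneg _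
    simp only [Pi.add_apply, rhoB, Fin.val_last]
    rw [abs_of_nonneg (by linarith)]
    linarith
  have hν0 : 0 < (lam + rhoB (m + 1)) (Fin.last m) := by
    have h4 : 0 ≤ lam (Fin.last m) := hl.2.1 _
    have h6 : (0 : ℚ) ≤ ((m : ℕ) : ℚ) := Nat.cast_nonneg _
    simp only [Pi.add_apply, rhoB, Fin.val_last]
    linarith
  have heq : (mu + rhoB (m + 1)) (Fin.last m) = (lam + rhoB (m + 1)) (Fin.last m) := by
    simp only [Pi.add_apply, he]
  have H := weyl_sum_reduce (rootsB (m + 1)) (rootsB m) hposB himgB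
    (fun _ => 1) (fun _ => 1) (fun _ => rfl)
    (lam + rhoB (m + 1)) (mu + rhoB (m + 1)) hν hν0 heq
  rw [init_add, init_add, init_rhoB] at H
  rw [KB, KB]
  simpa [one_mul] using H

lemma KC_reduce (lam mu : Fin (m + 1) → ℚ) (hl : DominantC lam) (hmu : DominantC mu)
    (he : lam (Fin.last m) = mu (Fin.last m)) :
    KC (m + 1) lam mu = KC m (Fin.init lam) (Fin.init mu) := by
  have hν : ∀ j : Fin (m + 1), j ≠ Fin.last m →
      |(lam + rhoC (m + 1)) j| < (lam + rhoC (m + 1)) (Fin.last m) := by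
    intro j hj
    have hj' : (j : ℕ) < m := ne_last_lt hj
    have h3 : lam j ≤ lam (Fin.last m) := hl.1 (Fin.le_last j)
    have h4 : 0 ≤ lam j := hl.2.1 j
    have h5 : ((j : ℕ) : ℚ) < (m : ℚ) := by exact_mod_cast hj'
    have h6 : (0 : ℚ) ≤ ((j : ℕ) : ℚ) := Nat.cast_nonneg _
    simp only [Pi.add_apply, rhoC, Fin.val_last]
    rw [abs_of_nonneg (by linarith)]
    linarith
  have hν0 : 0 < (lam + rhoC (m + 1)) (Fin.last m) := by
    have h4 : 0 ≤ lam (Fin.last m) := hl.2.1 _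
    have h6 : (0 : ℚ) ≤ ((m : ℕ) : ℚ) := Nat.cast_nonneg _
    simp only [Pi.add_apply, rhoC, Fin.val_last]
    linarith
  have heq : (mu + rhoC (m + 1)) (Fin.last m) = (lam + rhoC (m + 1)) (Fin.last m) := by
    simp only [Pi.add_apply, he]
  have H := weyl_sum_reduce (rootsC (m + 1)) (rootsC m) hposC himgC
    (fun _ => 1) (fun _ => 1) (fun _ => rfl)
    (lam + rhoC (m + 1)) (mu + rhoC (m + 1)) hν hν0 heq
  rw [init_add, init_add, init_rhoC] at H
  rw [KC, KC]
  simpa [one_mul] using H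

lemma KD_reduce (hm : 1 ≤ m) (lam mu : Fin (m + 1) → ℚ)
    (hl : DominantD lam) (hmu : DominantD mu)
    (he : lam (Fin.last m) = mu (Fin.last m)) :
    KD (m + 1) lam mu = KD m (Fin.init lam) (Fin.init mu) := by
  have hlast0 : 0 < ((Fin.last m : Fin (m + 1)) : ℕ) := by
    rw [Fin.val_last]; omega
  have h0le : |lam ⟨0, Nat.succ_pos m⟩| ≤ lam (Fin.last m) :=
    hl.2.1 (Nat.succ_pos m) (Fin.last m) hlast0
  have hm' : (1 : ℚ) ≤ (m : ℚ) := by exact_mod_cast hm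
  have hν : ∀ j : Fin (m + 1), j ≠ Fin.last m →
      |(lam + rhoD (m + 1)) j| < (lam + rhoD (m + 1)) (Fin.last m) := by
    intro j hj
    have hj' : (j : ℕ) < m := ne_last_lt hj
    simp only [Pi.add_apply, rhoD, Fin.val_last]
    by_cases h0 : (j : ℕ) = 0
    · have hj0 : j = ⟨0, Nat.succ_pos m⟩ := Fin.ext h0
      rw [hj0]
      show |lam ⟨0, Nat.succ_pos m⟩ + ((0 : ℕ) : ℚ)| < _
      rw [Nat.cast_zero, add_zero]
      linarith [abs_nonneg (lam ⟨0, Nat.succ_pos m⟩), h0le]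
    · have hpos1 : 0 < (j : ℕ) := Nat.pos_of_ne_zero h0
      have h3 : lam j ≤ lam (Fin.last m) := hl.1 j (Fin.last m) (Fin.le_last j) hpos1
      have h4 : 0 ≤ lam j :=
        le_trans (abs_nonneg _) (hl.2.1 (Nat.succ_pos m) j hpos1)
      have h5 : ((j : ℕ) : ℚ) < (m : ℚ) := by exact_mod_cast hj'
      rw [abs_of_nonneg (add_nonneg h4 (Nat.cast_nonneg _))]
      linarith
  have hν0 : 0 < (lam + rhoD (m + 1)) (Fin.last m) := by
    have h4 : 0 ≤ lam (Fin.last m) := le_trans (abs_nonneg _) h0le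
    simp only [Pi.add_apply, rhoD, Fin.val_last]
    linarith
  have heq : (mu + rhoD (m + 1)) (Fin.last m) = (lam + rhoD (m + 1)) (Fin.last m) := by
    simp only [Pi.add_apply, he]
  have hform : ∀ (b w : ℤ) (K : PowerSeries ℤ),
      (if b = 1 then w • K else (0 : PowerSeries ℤ)) = ((if b = 1 then 1 else 0) * w) • K := by
    intro b w K; split <;> simp
  have H := weyl_sum_reduce (rootsD (m + 1)) (rootsD m) hposD himgD
    (fun ε => if (∏ i, (if ε i = true then (-1 : ℤ) else 1)) = 1 then 1 else 0)
    (fun ε' => if (∏ i, (if ε' i = true then (-1 : ℤ) else 1)) = 1 then 1 else 0)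
    (fun ε' => by simp only [prod_ite_snoc])
    (lam + rhoD (m + 1)) (mu + rhoD (m + 1)) hν hν0 heq
  rw [init_add, init_add, init_rhoD] at H
  rw [KD, KD]
  simp only [hform]
  exact H

end KRR

end KRRAux

/-- If `λ_n = μ_n` then the Kostka-Foulkes polynomial of rank `n`
equals the one of rank `n - 1` for the truncated weights, in types `B`, `C`, `D`. -/
theorem K_rank_reduction :
    (∀ n : ℕ, ∀ hn : 2 ≤ n, ∀ lam mu : Fin n → ℤ,
      DominantB (fun i => (lam i : ℚ)) → DominantB (fun i => (mu i : ℚ)) →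
      lam ⟨n - 1, by omega⟩ = mu ⟨n - 1, by omega⟩ →
      KB n (fun i => (lam i : ℚ)) (fun i => (mu i : ℚ)) =
        KB (n - 1) (restrict1 fun i => (lam i : ℚ)) (restrict1 fun i => (mu i : ℚ))) ∧
    (∀ n : ℕ, ∀ hn : 2 ≤ n, ∀ lam mu : Fin n → ℤ,
      DominantC (fun i => (lam i : ℚ)) → DominantC (fun i => (mu i : ℚ)) →
      lam ⟨n - 1, by omega⟩ = mu ⟨n - 1, by omega⟩ →
      KC n (fun i => (lam i : ℚ)) (fun i => (mu i : ℚ)) =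
        KC (n - 1) (restrict1 fun i => (lam i : ℚ)) (restrict1 fun i => (mu i : ℚ))) ∧
    (∀ n : ℕ, ∀ hn : 3 ≤ n, ∀ lam mu : Fin n → ℤ,
      DominantD (fun i => (lam i : ℚ)) → DominantD (fun i => (mu i : ℚ)) →
      lam ⟨n - 1, by omega⟩ = mu ⟨n - 1, by omega⟩ →
      KD n (fun i => (lam i : ℚ)) (fun i => (mu i : ℚ)) =
        KD (n - 1) (restrict1 fun i => (lam i : ℚ)) (restrict1 fun i => (mu i : ℚ))) := by
  refine ⟨?_, ?_, ?_⟩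
  · intro n hn lam mu h1 h2 h3
    obtain ⟨m, rfl⟩ : ∃ m, n = m + 1 := ⟨n - 1, by omega⟩
    have he : (fun i => (lam i : ℚ)) (Fin.last m) = (fun i => (mu i : ℚ)) (Fin.last m) := by
      show ((lam (Fin.last m) : ℤ) : ℚ) = ((mu (Fin.last m) : ℤ) : ℚ)
      exact_mod_cast h3
    exact KRR.KB_reduce _ _ h1 h2 he
  · intro n hn lam mu h1 h2 h3
    obtain ⟨m, rfl⟩ : ∃ m, n = m + 1 := ⟨n - 1, by omega⟩
    have he : (fun i => (lam i : ℚ)) (Fin.last m) = (fun i => (mu i : ℚ)) (Fin.last m) := by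
      show ((lam (Fin.last m) : ℤ) : ℚ) = ((mu (Fin.last m) : ℤ) : ℚ)
      exact_mod_cast h3
    exact KRR.KC_reduce _ _ h1 h2 he
  · intro n hn lam mu h1 h2 h3
    obtain ⟨m, rfl⟩ : ∃ m, n = m + 1 := ⟨n - 1, by omega⟩
    have he : (fun i => (lam i : ℚ)) (Fin.last m) = (fun i => (mu i : ℚ)) (Fin.last m) := by
      show ((lam (Fin.last m) : ℤ) : ℚ) = ((mu (Fin.last m) : ℤ) : ℚ)
      exact_mod_cast h3
    exact KRR.KD_reduce (by omega) _ _ h1 h2 he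
end

section
/- Let Ψ : ℚ² → ℚ² be the linear map Ψ(λ_2, λ_1) = (λ_2 + λ_1, λ_2 − λ_1). If λ and μ are dominant weights of type B_2, then Ψ(λ) and Ψ(μ) are dominant weights of type C_2 with integer coordinates, and K^{B_2}_{λ,μ}(q) = K^{C_2}_{Ψ(λ),Ψ(μ)}(q). -/
open scoped BigOperators

namespace KB2Aux

noncomputable section

/-- The linear map `Ψ`. -/
def psiL : (Fin 2 → ℚ) →ₗ[ℚ] (Fin 2 → ℚ) where
  toFun β := ![β 1 - β 0, β 1 + β 0]
  map_add' x y := by funext i; fin_cases i <;> simp <;> ring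
  map_smul' c x := by funext i; fin_cases i <;> simp <;> ring

def phi (β : Fin 2 → ℚ) : Fin 2 → ℚ := ![(β 1 - β 0)/2, (β 1 + β 0)/2]

@[simp] lemma psiL_apply_zero (x : Fin 2 → ℚ) : psiL x 0 = x 1 - x 0 := rfl
@[simp] lemma psiL_apply_one (x : Fin 2 → ℚ) : psiL x 1 = x 1 + x 0 := rfl

lemma psi_inj : Function.Injective psiL := by
  intro x y h
  have h0 := congrFun h 0
  have h1 := congrFun h 1
  simp only [psiL_apply_zero, psiL_apply_one] at h0 h1
  funext i; fin_cases i
  · show x 0 = y 0; linarith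
  · show x 1 = y 1; linarith

lemma phi_psi (β : Fin 2 → ℚ) : phi (psiL β) = β := by
  funext i; fin_cases i
  · show phi (psiL β) 0 = β 0; simp [phi]; try ring
  · show phi (psiL β) 1 = β 1; simp [phi]; try ring

lemma psi_phi (β : Fin 2 → ℚ) : psiL (phi β) = β := by
  funext i; fin_cases i
  · show psiL (phi β) 0 = β 0; simp [phi]; try ring
  · show psiL (phi β) 1 = β 1; simp [phi]; try ring

lemma mem_rootsB2 (α : Fin 2 → ℚ) : α ∈ rootsB 2 ↔
    α = ![-1,1] ∨ α = ![1,1] ∨ α = ![1,0] ∨ α = ![0,1] := by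
  simp only [rootsB, rootsD, Finset.mem_union, Finset.mem_image, Finset.mem_filter,
    Finset.mem_univ, true_and, Prod.exists]
  constructor
  · rintro ((⟨a,b,h,rfl⟩|⟨a,b,h,rfl⟩)|⟨i,rfl⟩)
    · fin_cases a <;> fin_cases b <;> simp_all
      left; funext i; fin_cases i <;> simp [Pi.single_apply]
    · fin_cases a <;> fin_cases b <;> simp_all
      right; left; funext i; fin_cases i <;> simp [Pi.single_apply]
    · fin_cases i
      · right;right;left; funext i; fin_cases i <;> simp [Pi.single_apply]
      · right;right;right; funext i; fin_cases i <;> simp [Pi.single_apply]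
  · rintro (rfl|rfl|rfl|rfl)
    · left; left; exact ⟨1,0, by simp, by funext i; fin_cases i <;> simp [Pi.single_apply]⟩
    · left; right; exact ⟨1,0, by simp, by funext i; fin_cases i <;> simp [Pi.single_apply]⟩
    · right; exact ⟨0, by funext i; fin_cases i <;> simp [Pi.single_apply]⟩
    · right; exact ⟨1, by funext i; fin_cases i <;> simp [Pi.single_apply]⟩

lemma mem_rootsC2 (α : Fin 2 → ℚ) : α ∈ rootsC 2 ↔
    α = ![-1,1] ∨ α = ![1,1] ∨ α = ![2,0] ∨ α = ![0,2] := by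
  simp only [rootsC, rootsD, Finset.mem_union, Finset.mem_image, Finset.mem_filter,
    Finset.mem_univ, true_and, Prod.exists]
  constructor
  · rintro ((⟨a,b,h,rfl⟩|⟨a,b,h,rfl⟩)|⟨i,rfl⟩)
    · fin_cases a <;> fin_cases b <;> simp_all
      left; funext i; fin_cases i <;> simp [Pi.single_apply]
    · fin_cases a <;> fin_cases b <;> simp_all
      right; left; funext i; fin_cases i <;> simp [Pi.single_apply]
    · fin_cases i
      · right;right;left; funext i; fin_cases i <;> simp [Pi.single_apply]
      · right;right;right; funext i; fin_cases i <;> simp [Pi.single_apply]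
  · rintro (rfl|rfl|rfl|rfl)
    · left; left; exact ⟨1,0, by simp, by funext i; fin_cases i <;> simp [Pi.single_apply]⟩
    · left; right; exact ⟨1,0, by simp, by funext i; fin_cases i <;> simp [Pi.single_apply]⟩
    · right; exact ⟨0, by funext i; fin_cases i <;> simp [Pi.single_apply]⟩
    · right; exact ⟨1, by funext i; fin_cases i <;> simp [Pi.single_apply]⟩

lemma psi_mem {α : Fin 2 → ℚ} (h : α ∈ rootsB 2) : psiL α ∈ rootsC 2 := by
  rw [mem_rootsB2] at h; rw [mem_rootsC2]
  rcases h with rfl|rfl|rfl|rfl <;>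
    [(right;right;left); (right;right;right); left; (right;left)] <;>
    (funext i; fin_cases i <;> simp <;> norm_num)

lemma phi_mem {α : Fin 2 → ℚ} (h : α ∈ rootsC 2) : phi α ∈ rootsB 2 := by
  rw [mem_rootsC2] at h; rw [mem_rootsB2]
  rcases h with rfl|rfl|rfl|rfl <;>
    [(right;right;left); (right;right;right); left; (right;left)] <;>
    (funext i; fin_cases i <;> simp [phi] <;> norm_num)

def E : {α // α ∈ rootsB 2} ≃ {α // α ∈ rootsC 2} where
  toFun α := ⟨psiL α, psi_mem α.2⟩
  invFun α := ⟨phi α, phi_mem α.2⟩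
  left_inv α := Subtype.ext (phi_psi α)
  right_inv α := Subtype.ext (psi_phi α)

lemma kostantQ_psi (β : Fin 2 → ℚ) :
    kostantQ (rootsB 2) β = kostantQ (rootsC 2) (psiL β) := by
  unfold kostantQ
  apply PowerSeries.ext
  intro k
  rw [PowerSeries.coeff_mk, PowerSeries.coeff_mk]
  congr 1
  apply Nat.card_congr
  refine Equiv.subtypeEquiv (Equiv.arrowCongr E (Equiv.refl ℕ)) fun m => ?_
  have hsum : ∑ α', (Equiv.arrowCongr E (Equiv.refl ℕ)) m α' = ∑ α, m α := by
    simpa using Equiv.sum_comp E.symm m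
  have hvec : ∑ α', ((Equiv.arrowCongr E (Equiv.refl ℕ)) m α' : ℚ) • (α' : Fin 2 → ℚ)
      = psiL (∑ α, (m α : ℚ) • (α : Fin 2 → ℚ)) := by
    rw [map_sum]
    rw [← Equiv.sum_comp E (fun α' => ((Equiv.arrowCongr E (Equiv.refl ℕ)) m α' : ℚ) • (α' : Fin 2 → ℚ))]
    refine Finset.sum_congr rfl fun α _ => ?_
    simp [Equiv.arrowCongr, map_smul]
    rfl
  rw [hsum, hvec]
  exact and_congr Iff.rfl (psi_inj.eq_iff).symm

lemma perm_univ : (Finset.univ : Finset (Equiv.Perm (Fin 2))) = {1, Equiv.swap 0 1} := by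
  decide

lemma bool_univ : (Finset.univ : Finset (Fin 2 → Bool)) =
    {![false,false], ![true,false], ![false,true], ![true,true]} := by decide

lemma expand_sum {M : Type*} [AddCommMonoid M] (f : Equiv.Perm (Fin 2) → (Fin 2 → Bool) → M) :
    (∑ σ : Equiv.Perm (Fin 2), ∑ ε : Fin 2 → Bool, f σ ε) =
    f 1 ![false,false] + f 1 ![true,false] + f 1 ![false,true] + f 1 ![true,true] +
    (f (Equiv.swap 0 1) ![false,false] + f (Equiv.swap 0 1) ![true,false] +
     f (Equiv.swap 0 1) ![false,true] + f (Equiv.swap 0 1) ![true,true]) := by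
  rw [perm_univ, bool_univ]
  rw [Finset.sum_insert (by decide), Finset.sum_singleton]
  rw [Finset.sum_insert (by decide), Finset.sum_insert (by decide),
    Finset.sum_insert (by decide), Finset.sum_singleton,
    Finset.sum_insert (by decide), Finset.sum_insert (by decide),
    Finset.sum_insert (by decide), Finset.sum_singleton]
  abel

end

lemma swap01_inv : (Equiv.swap (0:Fin 2) 1)⁻¹ = Equiv.swap 0 1 := Equiv.swap_inv 0 1

section Conj
variable (x : Fin 2 → ℚ)

lemma conj1 : psiL (wAct 1 ![false,false] x) = wAct 1 ![false,false] (psiL x) := by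
  funext i; fin_cases i
  · show psiL (wAct 1 ![false,false] x) 0 = wAct 1 ![false,false] (psiL x) 0
    simp [wAct]
  · show psiL (wAct 1 ![false,false] x) 1 = wAct 1 ![false,false] (psiL x) 1
    simp [wAct]

lemma conj2 : psiL (wAct 1 ![true,false] x) = wAct (Equiv.swap 0 1) ![false,false] (psiL x) := by
  funext i; fin_cases i
  · show psiL (wAct 1 ![true,false] x) 0 = wAct (Equiv.swap 0 1) ![false,false] (psiL x) 0
    simp [wAct, swap01_inv]; try ring
  · show psiL (wAct 1 ![true,false] x) 1 = wAct (Equiv.swap 0 1) ![false,false] (psiL x) 1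
    simp [wAct, swap01_inv]; try ring

lemma conj3 : psiL (wAct 1 ![false,true] x) = wAct (Equiv.swap 0 1) ![true,true] (psiL x) := by
  funext i; fin_cases i
  · show psiL (wAct 1 ![false,true] x) 0 = wAct (Equiv.swap 0 1) ![true,true] (psiL x) 0
    simp [wAct, swap01_inv]; try ring
  · show psiL (wAct 1 ![false,true] x) 1 = wAct (Equiv.swap 0 1) ![true,true] (psiL x) 1
    simp [wAct, swap01_inv]; try ring

lemma conj4 : psiL (wAct 1 ![true,true] x) = wAct 1 ![true,true] (psiL x) := by
  funext i; fin_cases i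
  · show psiL (wAct 1 ![true,true] x) 0 = wAct 1 ![true,true] (psiL x) 0
    simp [wAct]; try ring
  · show psiL (wAct 1 ![true,true] x) 1 = wAct 1 ![true,true] (psiL x) 1
    simp [wAct]; try ring

lemma conj5 : psiL (wAct (Equiv.swap 0 1) ![false,false] x) = wAct 1 ![true,false] (psiL x) := by
  funext i; fin_cases i
  · show psiL (wAct (Equiv.swap 0 1) ![false,false] x) 0 = wAct 1 ![true,false] (psiL x) 0
    simp [wAct, swap01_inv]; try ring
  · show psiL (wAct (Equiv.swap 0 1) ![false,false] x) 1 = wAct 1 ![true,false] (psiL x) 1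
    simp [wAct, swap01_inv]; try ring

lemma conj6 : psiL (wAct (Equiv.swap 0 1) ![true,false] x) = wAct (Equiv.swap 0 1) ![false,true] (psiL x) := by
  funext i; fin_cases i
  · show psiL (wAct (Equiv.swap 0 1) ![true,false] x) 0 = wAct (Equiv.swap 0 1) ![false,true] (psiL x) 0
    simp [wAct, swap01_inv]; try ring
  · show psiL (wAct (Equiv.swap 0 1) ![true,false] x) 1 = wAct (Equiv.swap 0 1) ![false,true] (psiL x) 1
    simp [wAct, swap01_inv]; try ring

lemma conj7 : psiL (wAct (Equiv.swap 0 1) ![false,true] x) = wAct (Equiv.swap 0 1) ![true,false] (psiL x) := by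
  funext i; fin_cases i
  · show psiL (wAct (Equiv.swap 0 1) ![false,true] x) 0 = wAct (Equiv.swap 0 1) ![true,false] (psiL x) 0
    simp [wAct, swap01_inv]; try ring
  · show psiL (wAct (Equiv.swap 0 1) ![false,true] x) 1 = wAct (Equiv.swap 0 1) ![true,false] (psiL x) 1
    simp [wAct, swap01_inv]; try ring

lemma conj8 : psiL (wAct (Equiv.swap 0 1) ![true,true] x) = wAct 1 ![false,true] (psiL x) := by
  funext i; fin_cases i
  · show psiL (wAct (Equiv.swap 0 1) ![true,true] x) 0 = wAct 1 ![false,true] (psiL x) 0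
    simp [wAct, swap01_inv]; try ring
  · show psiL (wAct (Equiv.swap 0 1) ![true,true] x) 1 = wAct 1 ![false,true] (psiL x) 1
    simp [wAct, swap01_inv]; try ring

end Conj

lemma sign_swap01 : (Equiv.Perm.sign (Equiv.swap (0:Fin 2) 1) : ℤ) = -1 := by
  rw [Equiv.Perm.sign_swap (by decide)]; rfl

lemma det_1ff : wDet 1 ![false,false] = 1 := by simp [wDet, Fin.prod_univ_two]
lemma det_1tf : wDet 1 ![true,false] = -1 := by simp [wDet, Fin.prod_univ_two]
lemma det_1ft : wDet 1 ![false,true] = -1 := by simp [wDet, Fin.prod_univ_two]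
lemma det_1tt : wDet 1 ![true,true] = 1 := by simp [wDet, Fin.prod_univ_two]
lemma det_sff : wDet (Equiv.swap 0 1) ![false,false] = -1 := by
  simp [wDet, Fin.prod_univ_two, sign_swap01]
lemma det_stf : wDet (Equiv.swap 0 1) ![true,false] = 1 := by
  simp [wDet, Fin.prod_univ_two, sign_swap01]
lemma det_sft : wDet (Equiv.swap 0 1) ![false,true] = 1 := by
  simp [wDet, Fin.prod_univ_two, sign_swap01]
lemma det_stt : wDet (Equiv.swap 0 1) ![true,true] = -1 := by
  simp [wDet, Fin.prod_univ_two, sign_swap01]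

lemma psi_rho (lam : Fin 2 → ℚ) :
    psiL (lam + rhoB 2) = ![lam 1 - lam 0, lam 1 + lam 0] + rhoC 2 := by
  funext i; fin_cases i
  · show psiL (lam + rhoB 2) 0 = (![lam 1 - lam 0, lam 1 + lam 0] + rhoC 2) 0
    simp [rhoB, rhoC]; ring
  · show psiL (lam + rhoB 2) 1 = (![lam 1 - lam 0, lam 1 + lam 0] + rhoC 2) 1
    simp [rhoB, rhoC]; ring

lemma dominantC_psi (lam : Fin 2 → ℚ) (h : DominantB lam) :
    DominantC ![lam 1 - lam 0, lam 1 + lam 0] := by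
  obtain ⟨hmono, hpos, hint⟩ := h
  have h01 : lam 0 ≤ lam 1 := hmono (by decide : (0:Fin 2) ≤ 1)
  have h0 : 0 ≤ lam 0 := hpos 0
  refine ⟨?_, ?_, ?_⟩
  · intro i j hij
    fin_cases i <;> fin_cases j
    · exact le_refl _
    · show lam 1 - lam 0 ≤ lam 1 + lam 0
      linarith
    · exact absurd hij (by decide)
    · exact le_refl _
  · intro i; fin_cases i
    · show (0:ℚ) ≤ lam 1 - lam 0; linarith
    · show (0:ℚ) ≤ lam 1 + lam 0; linarith
  · intro i
    rcases hint with hz | hz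
    · obtain ⟨z0, hz0⟩ := hz 0
      obtain ⟨z1, hz1⟩ := hz 1
      fin_cases i
      · exact ⟨z1 - z0, by show lam 1 - lam 0 = _; push_cast; rw [hz0, hz1]⟩
      · exact ⟨z1 + z0, by show lam 1 + lam 0 = _; push_cast; rw [hz0, hz1]⟩
    · obtain ⟨z0, hz0⟩ := hz 0
      obtain ⟨z1, hz1⟩ := hz 1
      fin_cases i
      · exact ⟨z1 - z0, by show lam 1 - lam 0 = _; rw [hz0, hz1]; push_cast; ring⟩
      · exact ⟨z1 + z0 + 1, by show lam 1 + lam 0 = _; rw [hz0, hz1]; push_cast; ring⟩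

end KB2Aux

/-- Under the linear map `Ψ(λ_2, λ_1) = (λ_2 + λ_1, λ_2 - λ_1)`,
dominant weights of type `B_2` are sent to integral dominant weights of type `C_2`
and `K^{B_2}_{λ,μ}(q) = K^{C_2}_{Ψλ,Ψμ}(q)`. -/
theorem KB2_eq_KC2_psi (lam mu : Fin 2 → ℚ) (hlam : DominantB lam) (hmu : DominantB mu) :
    DominantC ![lam 1 - lam 0, lam 1 + lam 0] ∧
    DominantC ![mu 1 - mu 0, mu 1 + mu 0] ∧
    KB 2 lam mu = KC 2 ![lam 1 - lam 0, lam 1 + lam 0] ![mu 1 - mu 0, mu 1 + mu 0] := by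
  open KB2Aux in
  refine ⟨dominantC_psi lam hlam, dominantC_psi mu hmu, ?_⟩
  have key : ∀ (σ σ' : Equiv.Perm (Fin 2)) (ε ε' : Fin 2 → Bool),
      (psiL (wAct σ ε (lam + rhoB 2)) = wAct σ' ε' (psiL (lam + rhoB 2))) →
      kostantQ (rootsB 2) (wAct σ ε (lam + rhoB 2) - (mu + rhoB 2)) =
      kostantQ (rootsC 2)
        (wAct σ' ε' (![lam 1 - lam 0, lam 1 + lam 0] + rhoC 2) -
          (![mu 1 - mu 0, mu 1 + mu 0] + rhoC 2)) := by
    intro σ σ' ε ε' hc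
    rw [kostantQ_psi, map_sub, hc, psi_rho lam, psi_rho mu]
  rw [KB, KC, expand_sum, expand_sum]
  rw [key 1 1 ![false,false] ![false,false] (conj1 _),
      key 1 (Equiv.swap 0 1) ![true,false] ![false,false] (conj2 _),
      key 1 (Equiv.swap 0 1) ![false,true] ![true,true] (conj3 _),
      key 1 1 ![true,true] ![true,true] (conj4 _),
      key (Equiv.swap 0 1) 1 ![false,false] ![true,false] (conj5 _),
      key (Equiv.swap 0 1) (Equiv.swap 0 1) ![true,false] ![false,true] (conj6 _),
      key (Equiv.swap 0 1) (Equiv.swap 0 1) ![false,true] ![true,false] (conj7 _),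
      key (Equiv.swap 0 1) 1 ![true,true] ![false,true] (conj8 _)]
  rw [det_1ff, det_1tf, det_1ft, det_1tt, det_sff, det_stf, det_sft, det_stt]
  simp only [one_smul, neg_one_smul, neg_smul]
  abel
end
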